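/- Let G = (S, V, E, π, σ, α) be a restaking graph and let (A_1, B_1), …, (A_T, B_T) be a valid cascade of attacks on G. Then the pair (A_1 ∪ … ∪ A_T, B_1 ∪ … ∪ B_T) is a valid attack on G. -/

import Mathlib

/-- A restaking graph `G = (S, V, E, π, σ, α)`. -/
structure RestakingGraph where
  /-- services -/
  S : Type
  /-- validators -/
  V : Type
  finS : Fintype S
  finV : Fintype V
  /-- edge relation: `E s v` means validator `v` restakes for service `s` -/
  E : S → V → Prop
  /-- profit from corruption -/
  pi : S → ℝ
  /-- stake -/
  stake : V → ℝ
  /-- attack thresholds -/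
  alpha : S → ℝ
  pi_nonneg : ∀ s, 0 ≤ pi s
  stake_nonneg : ∀ v, 0 ≤ stake v
  alpha_pos : ∀ s, 0 < alpha s
  alpha_le_one : ∀ s, alpha s ≤ 1

attribute [instance] RestakingGraph.finS RestakingGraph.finV

namespace RestakingGraph

variable (G : RestakingGraph)

/-- `π_A = Σ_{s ∈ A} π_s` -/
noncomputable def piSum (A : Set G.S) : ℝ := ∑ᶠ s ∈ A, G.pi s

/-- `σ_B = Σ_{v ∈ B} σ_v` -/
noncomputable def stakeSum (B : Set G.V) : ℝ := ∑ᶠ v ∈ B, G.stake v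

/-- `N(s)`: validators adjacent to service `s` -/
def Ns (s : G.S) : Set G.V := {v | G.E s v}

/-- `N(v)`: services adjacent to validator `v` -/
def Nv (v : G.V) : Set G.S := {s | G.E s v}

/-- `N(A)`: validators adjacent to some service of `A` -/
def NA (A : Set G.S) : Set G.V := ⋃ s ∈ A, G.Ns s

/-- `N(C)`: validators adjacent to some service of `C` -/
def NC (C : Set G.S) : Set G.V := ⋃ s ∈ C, G.Ns s

/-- `Γ(C)`: validators exclusive to `C` -/
def Gamma (C : Set G.S) : Set G.V := {v | G.Nv v ⊆ C}

/-- total stake `σ_V` -/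
noncomputable def totalStake : ℝ := G.stakeSum Set.univ

/-- `(A, B)` is an attacking coalition on `G ↘ D` (for `D = ∅`, on `G` itself):
the remaining validators `B` control an `α_s` fraction of the remaining stake of
each `s ∈ A`. -/
def IsCoalition (D : Set G.V) (A : Set G.S) (B : Set G.V) : Prop :=
  Disjoint B D ∧ ∀ s ∈ A, G.alpha s * G.stakeSum (G.Ns s \ D) ≤ G.stakeSum (B ∩ G.Ns s)

/-- `(A, B)` is a valid attack on `G ↘ D`. -/
def IsValidAttack (D : Set G.V) (A : Set G.S) (B : Set G.V) : Prop :=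
  G.IsCoalition D A B ∧ G.stakeSum B < G.piSum A

/-- `(A, B)` is a stable attack on `G ↘ D`. -/
def IsStableAttack (D : Set G.V) (A : Set G.S) (B : Set G.V) : Prop :=
  G.IsValidAttack D A B ∧
    ∀ A' B', A' ⊆ A → B' ⊆ B → G.IsValidAttack D A' B' →
      G.stakeSum (B \ B') < G.piSum (A \ A')

/-- `B_1 ∪ ⋯ ∪ B_{t-1}`: the validators removed before step `t`. -/
def prevUnion {T : ℕ} (B : Fin T → Set G.V) (t : Fin T) : Set G.V :=
  ⋃ i : Fin T, ⋃ _ : i < t, B i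

/-- `(A_1, B_1), …, (A_T, B_T)` is a valid cascade of attacks on `G ↘ D`. -/
def IsCascade (D : Set G.V) {T : ℕ} (A : Fin T → Set G.S) (B : Fin T → Set G.V) : Prop :=
  (∀ i j, i ≠ j → Disjoint (A i) (A j)) ∧
  (∀ i j, i ≠ j → Disjoint (B i) (B j)) ∧
  ∀ t, G.IsValidAttack (D ∪ G.prevUnion B t) (A t) (B t)

/-- `(A_1, B_1), …, (A_T, B_T)` is a cascade of stable attacks on `G ↘ D`. -/
def IsStableCascade (D : Set G.V) {T : ℕ} (A : Fin T → Set G.S) (B : Fin T → Set G.V) : Prop :=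
  (∀ i j, i ≠ j → Disjoint (A i) (A j)) ∧
  (∀ i j, i ≠ j → Disjoint (B i) (B j)) ∧
  ∀ t, G.IsStableAttack (D ∪ G.prevUnion B t) (A t) (B t)

/-- `R_ψ(G)`: worst-case stake loss from a shock of relative size at most `ψ`
followed by an arbitrary valid cascade of attacks. -/
noncomputable def R (ψ : ℝ) : ℝ :=
  ψ + sSup { r : ℝ |
    ∃ (D : Set G.V) (T : ℕ) (A : Fin T → Set G.S) (B : Fin T → Set G.V),
      G.stakeSum D / G.totalStake ≤ ψ ∧ G.IsCascade D A B ∧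
      r = G.stakeSum (⋃ t, B t) / G.totalStake }

/-- `R_ψ(C, G)`: local worst-case stake loss (under stable attacks) for the
coalition of services `C`. -/
noncomputable def Rloc (C : Set G.S) (ψ : ℝ) : ℝ :=
  ψ + sSup { r : ℝ |
    ∃ (D : Set G.V) (T : ℕ) (A : Fin T → Set G.S) (B : Fin T → Set G.V),
      G.stakeSum (D ∩ G.Gamma C) / G.stakeSum (G.Gamma C) ≤ ψ ∧ G.IsStableCascade D A B ∧
      r = G.stakeSum ((⋃ t, B t) ∩ G.Gamma C) / G.stakeSum (G.Gamma C) }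

/-- `G` is secure: no valid attack exists. -/
def Secure : Prop := ∀ A B, ¬ G.IsValidAttack ∅ A B

/-- `G` is secure with `γ`-slack. -/
def SecureWithSlack (γ : ℝ) : Prop :=
  ∀ A B, G.IsCoalition ∅ A B → (1 + γ) * G.piSum A ≤ G.stakeSum B

/-- `(X, Y)` is an attack header on `G`. -/
def IsAttackHeader (X : Set G.S) (Y : Set G.V) : Prop :=
  Y ⊆ G.Gamma X ∧ ∃ B : Set G.V, B ∩ G.Gamma X = ∅ ∧ G.IsCoalition ∅ X (B ∪ Y)

/-- The EigenLayer sufficient condition. -/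
def EigenLayerCond : Prop :=
  ∀ v : G.V,
    (∑ᶠ s ∈ G.Nv v, G.stake v / G.stakeSum (G.Ns s) * (G.pi s / G.alpha s)) ≤ G.stake v

/-- The `γ`-scaled EigenLayer condition. -/
def EigenLayerSlackCond (γ : ℝ) : Prop :=
  ∀ v : G.V,
    (∑ᶠ s ∈ G.Nv v, G.stake v / G.stakeSum (G.Ns s) * ((1 + γ) * G.pi s / G.alpha s))
      ≤ G.stake v

end RestakingGraph

/-!
On `G` itself, the `t`-th step of the cascade becomes an attacking coalition for `A_t` once the
validators `B_1 ∪ ⋯ ∪ B_{t-1}` deleted before it are added to `B_t`: since `α_s ≤ 1`, the deleted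
part of `N(s)` covers its own `α_s` fraction. Hence `B_1 ∪ ⋯ ∪ B_T` attacks every service of
`A_1 ∪ ⋯ ∪ A_T`, and validity follows by summing the strict inequalities `σ_{B_t} < π_{A_t}` over the
disjoint steps, of which there is at least one.
-/

namespace RestakingGraph

open Function

variable (G : RestakingGraph)

lemma stakeSum_nonneg (X : Set G.V) : 0 ≤ G.stakeSum X :=
  finsum_nonneg fun v => finsum_nonneg fun _ => G.stake_nonneg v

lemma stakeSum_union {X Y : Set G.V} (h : Disjoint X Y) :
    G.stakeSum (X ∪ Y) = G.stakeSum X + G.stakeSum Y :=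
  finsum_mem_union h X.toFinite Y.toFinite

lemma stakeSum_mono {X Y : Set G.V} (h : X ⊆ Y) : G.stakeSum X ≤ G.stakeSum Y := by
  rw [← Set.union_sdiff_cancel h, G.stakeSum_union Set.disjoint_sdiff_right]
  exact le_add_of_nonneg_right (G.stakeSum_nonneg _)

lemma stakeSum_iUnion {ι : Type*} [Fintype ι] {X : ι → Set G.V} (h : Pairwise (Disjoint on X)) :
    G.stakeSum (⋃ i, X i) = ∑ i, G.stakeSum (X i) := by
  rw [stakeSum, finsum_mem_iUnion h fun i => (X i).toFinite, finsum_eq_sum_of_fintype]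
  rfl

lemma piSum_iUnion {ι : Type*} [Fintype ι] {A : ι → Set G.S} (h : Pairwise (Disjoint on A)) :
    G.piSum (⋃ i, A i) = ∑ i, G.piSum (A i) := by
  rw [piSum, finsum_mem_iUnion h fun i => (A i).toFinite, finsum_eq_sum_of_fintype]
  rfl

lemma prevUnion_subset_iUnion {T : ℕ} (B : Fin T → Set G.V) (t : Fin T) :
    G.prevUnion B t ⊆ ⋃ i, B i :=
  Set.iUnion_mono fun _ => Set.iUnion_subset fun _ => subset_rfl

variable {G}

lemma IsCoalition.mono_right {D : Set G.V} {A : Set G.S} {B B' : Set G.V}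
    (h : G.IsCoalition D A B) (hBB' : B ⊆ B') (hB'D : Disjoint B' D) : G.IsCoalition D A B' :=
  ⟨hB'D, fun s hs => (h.2 s hs).trans (G.stakeSum_mono (Set.inter_subset_inter_left _ hBB'))⟩

lemma isCoalition_iUnion {ι : Type*} [Nonempty ι] {D : Set G.V} {A : ι → Set G.S} {B : Set G.V}
    (h : ∀ i, G.IsCoalition D (A i) B) : G.IsCoalition D (⋃ i, A i) B := by
  refine ⟨(h (Classical.arbitrary ι)).1, fun s hs => ?_⟩
  obtain ⟨i, hsi⟩ := Set.mem_iUnion.1 hs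
  exact (h i).2 s hsi

lemma IsCoalition.union_deleted {D : Set G.V} {A : Set G.S} {B : Set G.V}
    (h : G.IsCoalition D A B) : G.IsCoalition ∅ A (B ∪ D) := by
  refine ⟨Set.disjoint_empty _, fun s hs => ?_⟩
  have hdisj : Disjoint (B ∩ G.Ns s) (D ∩ G.Ns s) :=
    h.1.mono Set.inter_subset_left Set.inter_subset_left
  calc G.alpha s * G.stakeSum (G.Ns s \ ∅)
      = G.alpha s * G.stakeSum (G.Ns s \ D) + G.alpha s * G.stakeSum (D ∩ G.Ns s) := by
        rw [Set.sdiff_empty, ← mul_add, Set.inter_comm, ← G.stakeSum_union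
          (Set.disjoint_sdiff_left.mono_right Set.inter_subset_right), Set.sdiff_union_inter]
    _ ≤ G.stakeSum (B ∩ G.Ns s) + G.stakeSum (D ∩ G.Ns s) :=
        add_le_add (h.2 s hs) (mul_le_of_le_one_left (G.stakeSum_nonneg _) (G.alpha_le_one s))
    _ = G.stakeSum ((B ∪ D) ∩ G.Ns s) := by
        rw [Set.union_inter_distrib_right, G.stakeSum_union hdisj]

end RestakingGraph

/-- Corollary: a valid cascade combines into a single valid attack.
If `(A_1, B_1), …, (A_T, B_T)` is a valid cascade of attacks on `G`, then
`(A_1 ∪ ⋯ ∪ A_T, B_1 ∪ ⋯ ∪ B_T)` is a valid attack on `G`. -/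
theorem cascade_combines
    (G : RestakingGraph) (T : ℕ) (hT : 0 < T)
    (A : Fin T → Set G.S) (B : Fin T → Set G.V)
    (h : G.IsCascade ∅ A B) :
    G.IsValidAttack ∅ (⋃ t, A t) (⋃ t, B t) := by
  obtain ⟨hA, hB, hvalid⟩ := h
  have : Nonempty (Fin T) := ⟨⟨0, hT⟩⟩
  refine ⟨RestakingGraph.isCoalition_iUnion fun t => ?_, ?_⟩
  · have hstep := (hvalid t).1
    rw [Set.empty_union] at hstep
    exact hstep.union_deleted.mono_right
      (Set.union_subset (Set.subset_iUnion B t) (G.prevUnion_subset_iUnion B t))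
      (Set.disjoint_empty _)
  · rw [G.stakeSum_iUnion hB, G.piSum_iUnion hA]
    exact Finset.sum_lt_sum_of_nonempty Finset.univ_nonempty fun t _ => (hvalid t).2
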